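/- (Simultaneous rank confidence intervals from the sequential-rejective algorithm.) In the setting of the sequential-rejective algorithm with Gaussian quantile critical values q(A), let R_final(ω) = R_{n(n−1)}(ω) (the recursion has stabilized after n(n−1) steps), and define L_i(ω) = 1 + #{j : (i,j) ∈ R_final(ω)} and U_i(ω) = n − #{j : (j,i) ∈ R_final(ω)}. Then P(for all i, L_i ≤ l_i and u_i ≤ U_i) ≥ 1 − α, i.e., the intervals [L_i, U_i] are simultaneous confidence intervals for the set-ranks at joint level 1 − α. -/

import Mathlib

/-!
Call a pair `(i, j)` with `μ j < μ i` a false null and let `T` be the set of false nulls. On the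
event `G` that the centred statistic `((y i - μ i) - (y j - μ j)) / s i j` is at most `q T` for
every true null pair, the step-down procedure rejects only false nulls: if `R k ⊆ T` then
`q (R k) ≥ q T`, because `q` is a quantile of a maximum over the larger set `H \ R k`, and the
observed statistic of a true null is at most its centred one. The centred vector `y - μ` has the
law of `Ỹ`, so `P G` is the probability that the maximum of `Ỹ` over the true nulls lies below its
own `(1 - α)`-quantile, which is at least `1 - α` by right-continuity of distribution functions.
Counting rejections in `R ⊆ T` gives the rank bounds.
-/

open MeasureTheory ProbabilityTheory Filter Set
open scoped NNReal

namespace ProbabilityTheory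

variable {ν : Measure ℝ} {c : ℝ}

lemma nonempty_setOf_le_cdf [IsProbabilityMeasure ν] (hc : c < 1) :
    {x | c ≤ cdf ν x}.Nonempty :=
  ((tendsto_cdf_atTop ν).eventually_const_le hc).exists

lemma bddBelow_setOf_le_cdf (hc : 0 < c) : BddBelow {x | c ≤ cdf ν x} := by
  obtain ⟨x₀, hx₀⟩ := eventually_atBot.mp ((tendsto_cdf_atBot ν).eventually_lt_const hc)
  refine ⟨x₀, fun x hx => ?_⟩
  by_contra! hlt
  exact (hx₀ x hlt.le).not_ge hx

lemma le_cdf_sInf_setOf_le_cdf [IsProbabilityMeasure ν] (hc : c < 1) :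
    c ≤ cdf ν (sInf {x | c ≤ cdf ν x}) := by
  have hright : ∀ x > sInf {x | c ≤ cdf ν x}, c ≤ cdf ν x := fun x hx => by
    obtain ⟨y, hy, hyx⟩ := exists_lt_of_csInf_lt (nonempty_setOf_le_cdf hc) hx
    exact hy.trans (monotone_cdf ν hyx.le)
  exact ge_of_tendsto (((cdf ν).right_continuous _).mono Ioi_subset_Ici_self)
    (eventually_nhdsWithin_of_forall hright)

end ProbabilityTheory

section Quantile

variable {Ω : Type*} [MeasurableSpace Ω] {P : Measure Ω} [IsProbabilityMeasure P]
  {X Y : Ω → ℝ} {c : ℝ}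

lemma measure_le_eq_ofReal_cdf (hX : AEMeasurable X P) (x : ℝ) :
    P {ω | X ω ≤ x} = ENNReal.ofReal (cdf (P.map X) x) := by
  have := Measure.isProbabilityMeasure_map hX
  rw [ofReal_cdf, Measure.map_apply_of_aemeasurable hX measurableSet_Iic]
  rfl

lemma setOf_ofReal_le_measure_le_eq (hX : AEMeasurable X P) :
    {x | ENNReal.ofReal c ≤ P {ω | X ω ≤ x}} = {x | c ≤ cdf (P.map X) x} := by
  ext x
  simp only [mem_ofPred_eq, measure_le_eq_ofReal_cdf hX,
    ENNReal.ofReal_le_ofReal_iff (cdf_nonneg _ x)]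

lemma ofReal_le_measure_le_sInf (hX : AEMeasurable X P) (hc : c < 1) :
    ENNReal.ofReal c ≤ P {ω | X ω ≤ sInf {x | ENNReal.ofReal c ≤ P {ω | X ω ≤ x}}} := by
  have := Measure.isProbabilityMeasure_map hX
  rw [setOf_ofReal_le_measure_le_eq hX, measure_le_eq_ofReal_cdf hX]
  exact ENNReal.ofReal_le_ofReal (le_cdf_sInf_setOf_le_cdf hc)

lemma sInf_setOf_ofReal_le_measure_le_mono (hX : AEMeasurable X P) (hY : AEMeasurable Y P)
    (hc₀ : 0 < c) (hc₁ : c < 1) (hXY : ∀ ω, X ω ≤ Y ω) :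
    sInf {x | ENNReal.ofReal c ≤ P {ω | X ω ≤ x}} ≤
      sInf {x | ENNReal.ofReal c ≤ P {ω | Y ω ≤ x}} := by
  have := Measure.isProbabilityMeasure_map hY
  refine csInf_le_csInf ?_ ?_ fun x hx => hx.trans (measure_mono fun ω hω => (hXY ω).trans hω)
  · rw [setOf_ofReal_le_measure_le_eq hX]
    exact bddBelow_setOf_le_cdf hc₀
  · rw [setOf_ofReal_le_measure_le_eq hY]
    exact nonempty_setOf_le_cdf hc₁

end Quantile

section MaxStatistic

variable {ι Ω α : Type*} [MeasurableSpace Ω] [ConditionallyCompleteLattice α] {B B' : Set ι}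

lemma measurable_sSup_image [Countable ι] {Z : ι → Ω → ℝ} (hZ : ∀ p, Measurable (Z p)) :
    Measurable fun ω => sSup ((fun p => Z p ω) '' B) := by
  simp_rw [image_eq_range]
  exact Measurable.iSup fun p => hZ p

lemma sSup_image_le_iff [Finite ι] {f : ι → α} (hB : B.Nonempty) {x : α} :
    sSup (f '' B) ≤ x ↔ ∀ p ∈ B, f p ≤ x := by
  rw [csSup_le_iff (toFinite _).bddAbove (hB.image f), forall_mem_image]

lemma sSup_image_mono [Finite ι] {f : ι → α} (hB : B.Nonempty) (hBB' : B ⊆ B') :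
    sSup (f '' B) ≤ sSup (f '' B') :=
  csSup_le_csSup (toFinite _).bddAbove (hB.image f) (image_mono hBB')

noncomputable def quantileMax (P : Measure Ω) (Z : ι → Ω → ℝ) (c : ℝ) (B : Set ι) : ℝ :=
  sInf {x | ENNReal.ofReal c ≤ P {ω | sSup ((fun p => Z p ω) '' B) ≤ x}}

variable {P : Measure Ω} [IsProbabilityMeasure P] {Z : ι → Ω → ℝ} {c : ℝ} [Finite ι]

lemma ofReal_le_measure_forall_le_quantileMax (hZ : ∀ p, Measurable (Z p)) (hB : B.Nonempty)
    (hc : c < 1) : ENNReal.ofReal c ≤ P {ω | ∀ p ∈ B, Z p ω ≤ quantileMax P Z c B} := by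
  refine (ofReal_le_measure_le_sInf (P := P) (measurable_sSup_image (B := B) hZ).aemeasurable
    hc).trans_eq ?_
  congr 1
  ext ω
  exact sSup_image_le_iff (α := ℝ) hB

lemma quantileMax_mono (hZ : ∀ p, Measurable (Z p)) (hB : B.Nonempty) (hBB' : B ⊆ B')
    (hc₀ : 0 < c) (hc₁ : c < 1) : quantileMax P Z c B ≤ quantileMax P Z c B' :=
  sInf_setOf_ofReal_le_measure_le_mono (measurable_sSup_image hZ).aemeasurable
    (measurable_sSup_image hZ).aemeasurable hc₀ hc₁ fun _ => sSup_image_mono hB hBB'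

end MaxStatistic

lemma IdentDistrib.pi_of_iIndepFun {ι Ω Ω' : Type*} [Fintype ι] [MeasurableSpace Ω]
    [MeasurableSpace Ω'] {β : ι → Type*} [∀ i, MeasurableSpace (β i)] {P : Measure Ω}
    {P' : Measure Ω'} {f : ∀ i, Ω → β i} {g : ∀ i, Ω' → β i}
    (hfg : ∀ i, IdentDistrib (f i) (g i) P P') (hf : iIndepFun f P) (hg : iIndepFun g P') :
    IdentDistrib (fun ω i => f i ω) (fun ω i => g i ω) P P' where
  aemeasurable_fst := aemeasurable_pi_lambda _ fun i => (hfg i).aemeasurable_fst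
  aemeasurable_snd := aemeasurable_pi_lambda _ fun i => (hfg i).aemeasurable_snd
  map_eq := by
    rw [hf.map_fun_eq_pi_map fun i => (hfg i).aemeasurable_fst,
      hg.map_fun_eq_pi_map fun i => (hfg i).aemeasurable_snd]
    simp_rw [(hfg _).map_eq]

lemma identDistrib_sub_mean_of_gaussianReal {ι Ω Ω' : Type*} [Fintype ι] [MeasurableSpace Ω]
    [MeasurableSpace Ω'] {P : Measure Ω} {P' : Measure Ω'} {m : ι → ℝ} {v : ι → ℝ≥0}
    {Y : ι → Ω → ℝ} {Y' : ι → Ω' → ℝ} (hY : ∀ i, Measurable (Y i)) (hYi : iIndepFun Y P)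
    (hYlaw : ∀ i, P.map (Y i) = gaussianReal (m i) (v i)) (hY' : ∀ i, Measurable (Y' i))
    (hY'i : iIndepFun Y' P') (hY'law : ∀ i, P'.map (Y' i) = gaussianReal 0 (v i)) :
    IdentDistrib (fun ω i => Y i ω - m i) (fun ω i => Y' i ω) P P' := by
  refine IdentDistrib.pi_of_iIndepFun (fun i => ⟨(hY i).sub_const _ |>.aemeasurable,
    (hY' i).aemeasurable, ?_⟩) (hYi.comp (fun i x => x - m i) fun i => measurable_sub_const _)
    hY'i
  change P.map ((· - m i) ∘ Y i) = P'.map (Y' i)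
  rw [hY'law, ← Measure.map_map (measurable_sub_const _) (hY i), hYlaw,
    gaussianReal_map_sub_const, sub_self]

lemma stepDown_subset {ι : Type*} {H T : Set ι} {q : Set ι → ℝ} {t : ι → ℝ} {R : ℕ → Set ι}
    (hR0 : R 0 = ∅) (hRs : ∀ k, R (k + 1) = R k ∪ {p | p ∈ H ∧ q (R k) < t p})
    (hT : ∀ A ⊆ T, ∀ p ∈ H \ T, t p ≤ q A) (k : ℕ) : R k ⊆ T := by
  induction k with
  | zero => simp [hR0]
  | succ k ih =>
    rw [hRs]
    refine union_subset ih fun p ⟨hpH, hp⟩ => ?_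
    by_contra hpT
    exact (hT _ ih p ⟨hpH, hpT⟩).not_gt hp

lemma rank_bounds_of_subset {n : ℕ} {μ : Fin n → ℝ} {R : Set (Fin n × Fin n)}
    (hR : R ⊆ {p | p.1 ≠ p.2 ∧ μ p.2 < μ p.1}) (i : Fin n) :
    1 + {j | (i, j) ∈ R}.ncard ≤ 1 + {j | j ≠ i ∧ μ j < μ i}.ncard ∧
      n - {j | j ≠ i ∧ μ i ≤ μ j}.ncard ≤ n - {j | (j, i) ∈ R}.ncard := by
  have hlower : {j | (i, j) ∈ R} ⊆ {j | j ≠ i ∧ μ j < μ i} := fun j hj =>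
    ⟨(hR hj).1.symm, (hR hj).2⟩
  have hupper : {j | (j, i) ∈ R} ⊆ {j | j ≠ i ∧ μ i ≤ μ j} := fun j hj =>
    ⟨(hR hj).1, (hR hj).2.le⟩
  exact ⟨Nat.add_le_add_left (ncard_le_ncard hlower) 1,
    Nat.sub_le_sub_left (ncard_le_ncard hupper) n⟩

theorem stmt_7_general {n : ℕ} {Ω Ω' : Type*} [MeasurableSpace Ω] [MeasurableSpace Ω']
    (P : Measure Ω) [IsProbabilityMeasure P] (P' : Measure Ω') [IsProbabilityMeasure P']
    (μ σ : Fin n → ℝ)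
    (y : Fin n → Ω → ℝ) (hymeas : ∀ i, Measurable (y i))
    (hyindep : iIndepFun y P)
    (hydist : ∀ i, P.map (y i) = gaussianReal (μ i) ⟨(σ i) ^ 2, sq_nonneg _⟩)
    (Yt : Fin n → Ω' → ℝ) (hYmeas : ∀ i, Measurable (Yt i))
    (hYindep : iIndepFun Yt P')
    (hYdist : ∀ i, P'.map (Yt i) = gaussianReal 0 ⟨(σ i) ^ 2, sq_nonneg _⟩)
    (α : ℝ) (hα : α ∈ Set.Ioo (0 : ℝ) 1)
    (q : Set (Fin n × Fin n) → ℝ)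
    (hq : ∀ A : Set (Fin n × Fin n), ({p : Fin n × Fin n | p.1 ≠ p.2} \ A).Nonempty →
      q A = sInf {x : ℝ | ENNReal.ofReal (1 - α) ≤
        P' {ω | sSup ((fun p : Fin n × Fin n =>
            (Yt p.1 ω - Yt p.2 ω) / Real.sqrt ((σ p.1) ^ 2 + (σ p.2) ^ 2)) ''
            ({p : Fin n × Fin n | p.1 ≠ p.2} \ A)) ≤ x}})
    (R : ℕ → Ω → Set (Fin n × Fin n))
    (hR0 : ∀ ω, R 0 ω = ∅)
    (hRs : ∀ k ω, R (k + 1) ω = R k ω ∪ {p : Fin n × Fin n | p.1 ≠ p.2 ∧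
      q (R k ω) < (y p.1 ω - y p.2 ω) / Real.sqrt ((σ p.1) ^ 2 + (σ p.2) ^ 2)}) :
    ENNReal.ofReal (1 - α) ≤
      P {ω | ∀ i : Fin n,
        1 + {j : Fin n | (i, j) ∈ R (n * (n - 1)) ω}.ncard
            ≤ 1 + {j : Fin n | j ≠ i ∧ μ j < μ i}.ncard ∧
        n - {j : Fin n | j ≠ i ∧ μ i ≤ μ j}.ncard
            ≤ n - {j : Fin n | (j, i) ∈ R (n * (n - 1)) ω}.ncard} := by
  obtain ⟨hα₀, hα₁⟩ := hα
  set H : Set (Fin n × Fin n) := {p | p.1 ≠ p.2}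
  set T : Set (Fin n × Fin n) := {p | p.1 ≠ p.2 ∧ μ p.2 < μ p.1}
  set s : Fin n × Fin n → ℝ := fun p => Real.sqrt ((σ p.1) ^ 2 + (σ p.2) ^ 2)
  set Zt : Fin n × Fin n → Ω' → ℝ := fun p ω => (Yt p.1 ω - Yt p.2 ω) / s p
  have hZt (p : Fin n × Fin n) : Measurable (Zt p) := ((hYmeas p.1).sub (hYmeas p.2)).div_const _
  have hq' : ∀ A, (H \ A).Nonempty → q A = quantileMax P' Zt (1 - α) (H \ A) := hq
  have hqT_le (A) (hA : A ⊆ T) (hN : (H \ T).Nonempty) : q T ≤ q A := by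
    have hNA : H \ T ⊆ H \ A := sdiff_subset_sdiff_right hA
    rw [hq' T hN, hq' A (hN.mono hNA)]
    exact quantileMax_mono hZt hN hNA (by linarith) (by linarith)
  have hgood : ENNReal.ofReal (1 - α) ≤
      P {ω | ∀ p ∈ H \ T, ((y p.1 ω - μ p.1) - (y p.2 ω - μ p.2)) / s p ≤ q T} := by
    rcases (H \ T).eq_empty_or_nonempty with hN | hN
    · simp [hN, hα₀.le]
    have hS : MeasurableSet {v : Fin n → ℝ | ∀ p ∈ H \ T, (v p.1 - v p.2) / s p ≤ q T} := by
      simp_rw [ofPred_forall]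
      exact .biInter (to_countable _) fun p _ => measurableSet_le (by fun_prop) measurable_const
    calc ENNReal.ofReal (1 - α) ≤ P' {ω | ∀ p ∈ H \ T, Zt p ω ≤ q T} := by
          rw [hq' T hN]
          exact ofReal_le_measure_forall_le_quantileMax hZt hN (by linarith)
      _ = _ := ((identDistrib_sub_mean_of_gaussianReal hymeas hyindep hydist hYmeas hYindep
          hYdist).measure_mem_eq hS).symm
  refine hgood.trans (measure_mono fun ω hω => rank_bounds_of_subset
    (stepDown_subset (R := fun k => R k ω) (hR0 ω) (fun k => hRs k ω) ?_ _))
  intro A hA p hp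
  have hμ : μ p.1 ≤ μ p.2 := not_lt.mp fun h => hp.2 ⟨hp.1, h⟩
  calc (y p.1 ω - y p.2 ω) / s p ≤ ((y p.1 ω - μ p.1) - (y p.2 ω - μ p.2)) / s p :=
        div_le_div_of_nonneg_right (by linarith) (Real.sqrt_nonneg _)
    _ ≤ q T := hω p hp
    _ ≤ q A := hqT_le A hA ⟨p, hp⟩

/-- Simultaneous rank confidence intervals from the sequential-rejective variant of
Tukey's HSD: with `R_final = R (n(n-1))`, the bounds
`L i = 1 + #{j : (i,j) ∈ R_final}` and `U i = n - #{j : (j,i) ∈ R_final}` satisfy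
`P(∀ i, L i ≤ l i ∧ u i ≤ U i) ≥ 1 - α`, where `l i = 1 + #{j ≠ i : μ j < μ i}` and
`u i = n - #{j ≠ i : μ j ≥ μ i}` are the set-ranks. -/
theorem stmt_7 {n : ℕ} {Ω Ω' : Type*} [MeasurableSpace Ω] [MeasurableSpace Ω']
    (P : Measure Ω) [IsProbabilityMeasure P] (P' : Measure Ω') [IsProbabilityMeasure P']
    (μ σ : Fin n → ℝ) (hσ : ∀ i, 0 < σ i)
    (y : Fin n → Ω → ℝ) (hymeas : ∀ i, Measurable (y i))
    (hyindep : iIndepFun y P)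
    (hydist : ∀ i, P.map (y i) = gaussianReal (μ i) ⟨(σ i) ^ 2, sq_nonneg _⟩)
    (Yt : Fin n → Ω' → ℝ) (hYmeas : ∀ i, Measurable (Yt i))
    (hYindep : iIndepFun Yt P')
    (hYdist : ∀ i, P'.map (Yt i) = gaussianReal 0 ⟨(σ i) ^ 2, sq_nonneg _⟩)
    (α : ℝ) (hα : α ∈ Set.Ioo (0 : ℝ) 1)
    (q : Set (Fin n × Fin n) → ℝ)
    (hq : ∀ A : Set (Fin n × Fin n), ({p : Fin n × Fin n | p.1 ≠ p.2} \ A).Nonempty →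
      q A = sInf {x : ℝ | ENNReal.ofReal (1 - α) ≤
        P' {ω | sSup ((fun p : Fin n × Fin n =>
            (Yt p.1 ω - Yt p.2 ω) / Real.sqrt ((σ p.1) ^ 2 + (σ p.2) ^ 2)) ''
            ({p : Fin n × Fin n | p.1 ≠ p.2} \ A)) ≤ x}})
    (R : ℕ → Ω → Set (Fin n × Fin n))
    (hR0 : ∀ ω, R 0 ω = ∅)
    (hRs : ∀ k ω, R (k + 1) ω = R k ω ∪ {p : Fin n × Fin n | p.1 ≠ p.2 ∧
      q (R k ω) < (y p.1 ω - y p.2 ω) / Real.sqrt ((σ p.1) ^ 2 + (σ p.2) ^ 2)}) :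
    ENNReal.ofReal (1 - α) ≤
      P {ω | ∀ i : Fin n,
        1 + {j : Fin n | (i, j) ∈ R (n * (n - 1)) ω}.ncard
            ≤ 1 + {j : Fin n | j ≠ i ∧ μ j < μ i}.ncard ∧
        n - {j : Fin n | j ≠ i ∧ μ i ≤ μ j}.ncard
            ≤ n - {j : Fin n | (j, i) ∈ R (n * (n - 1)) ω}.ncard} :=
  stmt_7_general P P' μ σ y hymeas hyindep hydist Yt hYmeas hYindep hYdist α hα q hq R hR0 hRs
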